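/- arXiv:math/0410563 — 5 statements merged into one kernel-verified Lean document; each statement's English description precedes it below -/
import Mathlib

section
/- Let G be an abelian group and f : G → G a group endomorphism. Write S = ⋂_{n≥1} f^n(G) for the intersection of the images of all iterates of f. Assume there exists N₀ ≥ 1 such that for every n ≥ 1, ker(f^n) ⊆ ker(f^{N₀}). Then for every x ∈ S there exists x₁ ∈ S with f(x₁) = x; that is, f restricted to S is surjective onto S. -/
/-! If `f^[N+1] u = x` and the kernels of the iterates stop growing at `N`, then `f^[N] u`
is a preimage of `x` that stays in every image `f^[n](G)` reached by `x`: any other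
representation `x = f^[N+1] (f^[n] v)` differs from `u` by an element of
`ker f^[N+1] = ker f^[N]`, so `f^[N] u = f^[n] (f^[N] v)`. -/

namespace AddMonoidHom

variable {G : Type*} [AddGroup G] (f : G →+ G) {N : ℕ}

theorem iterate_eq_of_iterate_succ_eq (hker : ∀ y, f^[N + 1] y = 0 → f^[N] y = 0) {u w : G}
    (h : f^[N + 1] u = f^[N + 1] w) : f^[N] u = f^[N] w := by
  have hsub : f^[N + 1] (u - w) = 0 := by rw [iterate_map_sub, h, sub_self]
  simpa only [iterate_map_sub, sub_eq_zero] using hker _ hsub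

theorem iterate_mem_range_iterate (hker : ∀ y, f^[N + 1] y = 0 → f^[N] y = 0) {u : G} {n : ℕ}
    (hu : f^[N + 1] u ∈ Set.range f^[N + 1 + n]) : f^[N] u ∈ Set.range f^[n] := by
  obtain ⟨v, hv⟩ := hu
  rw [Function.iterate_add_apply] at hv
  refine ⟨f^[N] v, ?_⟩
  rw [iterate_eq_of_iterate_succ_eq f hker hv.symm, ← Function.iterate_add_apply,
    ← Function.iterate_add_apply, Nat.add_comm]

end AddMonoidHom

theorem exists_preimage_in_sharp_general {G : Type*} [AddCommGroup G] (f : G →+ G)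
    (N₀ : ℕ)
    (hker : ∀ n, 1 ≤ n → ∀ y : G, (⇑f)^[n] y = 0 → (⇑f)^[N₀] y = 0) :
    ∀ x ∈ ⋂ n ∈ Set.Ici 1, Set.range ((⇑f)^[n]),
      ∃ x₁ ∈ ⋂ n ∈ Set.Ici 1, Set.range ((⇑f)^[n]), f x₁ = x := by
  intro x hx
  simp only [Set.mem_iInter, Set.mem_Ici] at hx ⊢
  obtain ⟨u, rfl⟩ := hx (N₀ + 1) le_add_self
  exact ⟨f^[N₀] u,
    fun n _ => f.iterate_mem_range_iterate (hker _ le_add_self) (hx _ (by omega)),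
    (Function.iterate_succ_apply' f N₀ u).symm⟩

/-- Sublemma S:S1 (group-theoretic form): let `f` be an endomorphism of an abelian
group `G`, `S = ⋂_{n ≥ 1} f^n(G)`, and suppose all kernels of iterates of `f` are
contained in `ker (f^{N₀})` for some `N₀ ≥ 1`. Then every `x ∈ S` is the image
under `f` of some `x₁ ∈ S`. -/
theorem exists_preimage_in_sharp {G : Type*} [AddCommGroup G] (f : G →+ G)
    (N₀ : ℕ) (hN₀ : 1 ≤ N₀)
    (hker : ∀ n, 1 ≤ n → ∀ y : G, (⇑f)^[n] y = 0 → (⇑f)^[N₀] y = 0) :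
    ∀ x ∈ ⋂ n ∈ Set.Ici 1, Set.range ((⇑f)^[n]),
      ∃ x₁ ∈ ⋂ n ∈ Set.Ici 1, Set.range ((⇑f)^[n]), f x₁ = x :=
  exists_preimage_in_sharp_general f N₀ hker
end

section
/- Let G be an abelian group and f : G → G a group endomorphism. Write S = ⋂_{n≥1} f^n(G) for the intersection of the images of all iterates of f. Assume there exists N₀ ≥ 1 such that for every n ≥ 1, ker(f^n) ⊆ ker(f^{N₀}). Then for every x ∈ S there exists a sequence (x_n)_{n≥0} of elements of S such that x_0 = x and f(x_{n+1}) = x_n for every n ≥ 0. -/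
/-!
If `ker f^[N+1] ⊆ ker f^[N]` and `x = f^[N+1] z` lies in every `f^[m](G)`, then `f^[N] z` is a
preimage of `x` that again lies in every `f^[n](G)`: writing `x = f^[n+N+1] w`, the difference
`z - f^[n] w` is killed by `f^[N+1]`, hence by `f^[N]`, so `f^[N] z = f^[n] (f^[N] w)`.
Thus `f` maps `S = ⋂ f^[n](G)` onto itself, and iterating a right inverse of `f` on `S`
gives the coherent sequence.
-/

theorem Set.SurjOn.exists_backward_orbit {α : Type*} {f : α → α} {s : Set α}
    (h : Set.SurjOn f s s) {x : α} (hx : x ∈ s) :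
    ∃ u : ℕ → α, u 0 = x ∧ (∀ n, u n ∈ s) ∧ ∀ n, f (u (n + 1)) = u n := by
  have : Nonempty α := ⟨x⟩
  have hmaps := h.mapsTo_invFunOn.iterate
  refine ⟨fun n => (Function.invFunOn f s)^[n] x, rfl, fun n => hmaps n hx, fun n => ?_⟩
  simp only [Function.iterate_succ_apply']
  exact h.rightInvOn_invFunOn (hmaps n hx)

section IterateRange

variable {G : Type*} [AddGroup G] (f : G →+ G) {N : ℕ}

theorem AddMonoidHom.iterate_mem_range_iterate_of_ker_le
    (hker : ∀ y, (⇑f)^[N + 1] y = 0 → (⇑f)^[N] y = 0) {x z : G} (hz : (⇑f)^[N + 1] z = x)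
    {n : ℕ} (hx : x ∈ Set.range (⇑f)^[n + N + 1]) :
    (⇑f)^[N] z ∈ Set.range (⇑f)^[n] := by
  obtain ⟨w, rfl⟩ := hx
  have hdiff : (⇑f)^[N + 1] (z - (⇑f)^[n] w) = 0 := by
    rw [iterate_map_sub, hz, ← Function.iterate_add_apply, Nat.add_comm (N + 1), ← Nat.add_assoc,
      sub_self]
  have hfN := hker _ hdiff
  rw [iterate_map_sub, sub_eq_zero] at hfN
  refine ⟨(⇑f)^[N] w, ?_⟩
  rw [hfN, ← Function.iterate_add_apply, ← Function.iterate_add_apply, Nat.add_comm]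

theorem AddMonoidHom.surjOn_iInter_range_iterate
    (hker : ∀ y, (⇑f)^[N + 1] y = 0 → (⇑f)^[N] y = 0) :
    Set.SurjOn f (⋂ n ∈ Set.Ici 1, Set.range (⇑f)^[n]) (⋂ n ∈ Set.Ici 1, Set.range (⇑f)^[n]) := by
  intro x hx
  simp only [Set.mem_iInter, Set.mem_Ici] at hx
  obtain ⟨z, hz⟩ := hx (N + 1) (by omega)
  refine ⟨(⇑f)^[N] z, ?_, by rw [← Function.iterate_succ_apply' f N z, hz]⟩
  simp only [Set.mem_iInter, Set.mem_Ici]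
  exact fun n _ => f.iterate_mem_range_iterate_of_ker_le hker hz (hx (n + N + 1) (by omega))

end IterateRange

theorem exists_coherent_sequence_in_sharp_general {G : Type*} [AddCommGroup G] (f : G →+ G)
    (N₀ : ℕ)
    (hker : ∀ n, 1 ≤ n → ∀ y : G, (⇑f)^[n] y = 0 → (⇑f)^[N₀] y = 0) :
    ∀ x ∈ ⋂ n ∈ Set.Ici 1, Set.range ((⇑f)^[n]),
      ∃ u : ℕ → G, u 0 = x ∧ (∀ n, u n ∈ ⋂ n ∈ Set.Ici 1, Set.range ((⇑f)^[n])) ∧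
        ∀ n, f (u (n + 1)) = u n :=
  fun _ hx =>
    (f.surjOn_iInter_range_iterate (hker (N₀ + 1) (Nat.le_add_left 1 N₀))).exists_backward_orbit hx

/-- Lemma L:coherence (group-theoretic form): let `f` be an endomorphism of an
abelian group `G`, `S = ⋂_{n ≥ 1} f^n(G)`, and suppose all kernels of iterates of
`f` are contained in `ker (f^{N₀})` for some `N₀ ≥ 1`. Then every `x ∈ S` admits
a coherent sequence `(x_n)` in `S` with `x₀ = x` and `f (x_{n+1}) = x_n`. -/
theorem exists_coherent_sequence_in_sharp {G : Type*} [AddCommGroup G] (f : G →+ G)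
    (N₀ : ℕ) (hN₀ : 1 ≤ N₀)
    (hker : ∀ n, 1 ≤ n → ∀ y : G, (⇑f)^[n] y = 0 → (⇑f)^[N₀] y = 0) :
    ∀ x ∈ ⋂ n ∈ Set.Ici 1, Set.range ((⇑f)^[n]),
      ∃ u : ℕ → G, u 0 = x ∧ (∀ n, u n ∈ ⋂ n ∈ Set.Ici 1, Set.range ((⇑f)^[n])) ∧
        ∀ n, f (u (n + 1)) = u n :=
  exists_coherent_sequence_in_sharp_general f N₀ hker
end

section
/- Let G be an abelian group and f : G → G a group endomorphism. Write S = ⋂_{n≥1} f^n(G) for the intersection of the images of all iterates of f. Assume there exists N₀ ≥ 1 such that for every n ≥ 1, ker(f^n) ⊆ ker(f^{N₀}). Then f maps S into S and the restriction of f to S is a bijection of S onto itself. -/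
/-!
On `S = ⋂ₙ range f^[n]` the map `f` is injective as soon as it is injective on `range f^[N]`,
which for an additive map is the stabilisation `ker f^[N+1] = ker f^[N]`. For surjectivity, write
`x ∈ S` as `f^[N+1] z`; then `f^[N] z` is a preimage lying in `S`, because for every `m` we also have
`x = f^[N+1] (f^[m] w)`, and injectivity of `f` on `range f^[N]` gives `f^[N] z = f^[m] (f^[N] w)`.
-/

open Set Function

section Iterate

variable {α : Type*}

theorem iInter_Ici_one_range_iterate (f : α → α) :
    ⋂ n ∈ Ici 1, range f^[n] = ⋂ n, range f^[n] := by
  ext x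
  simp only [mem_iInter, mem_Ici]
  refine ⟨fun hx n => ?_, fun hx n _ => hx n⟩
  rcases Nat.eq_zero_or_pos n with rfl | hn
  · exact ⟨x, rfl⟩
  · exact hx n hn

theorem mapsTo_iInter_range_iterate (f : α → α) :
    MapsTo f (⋂ n, range f^[n]) (⋂ n, range f^[n]) := by
  intro x hx
  refine mem_iInter.2 fun n => ?_
  obtain ⟨y, rfl⟩ := mem_iInter.1 hx n
  exact ⟨f y, (iterate_succ_apply f n y).symm.trans (iterate_succ_apply' f n y)⟩

theorem bijOn_iInter_range_iterate {f : α → α} {N : ℕ} (h : InjOn f (range f^[N])) :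
    BijOn f (⋂ n, range f^[n]) (⋂ n, range f^[n]) := by
  refine ⟨mapsTo_iInter_range_iterate f, h.mono (iInter_subset _ N), fun x hx => ?_⟩
  obtain ⟨z, rfl⟩ := mem_iInter.1 hx (N + 1)
  refine ⟨f^[N] z, mem_iInter.2 fun m => ?_, (iterate_succ_apply' f N z).symm⟩
  obtain ⟨w, hw⟩ := mem_iInter.1 hx (N + 1 + m)
  have hfz : f (f^[N] z) = f (f^[N] (f^[m] w)) := by
    rw [← iterate_succ_apply' f N, ← iterate_succ_apply' f N, ← hw, ← iterate_add_apply]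
  refine ⟨f^[N] w, ?_⟩
  rw [h (mem_range_self z) (mem_range_self _) hfz, ← iterate_add_apply, ← iterate_add_apply,
    Nat.add_comm]

end Iterate

theorem AddMonoidHom.injOn_range_iterate {G : Type*} [AddCommGroup G] (f : G →+ G) {N : ℕ}
    (h : ∀ y, f^[N + 1] y = 0 → f^[N] y = 0) : InjOn f (Set.range f^[N]) := by
  rintro _ ⟨a, rfl⟩ _ ⟨b, rfl⟩ hab
  have hsub : f^[N + 1] (a - b) = 0 := by
    rw [iterate_map_sub, iterate_succ_apply', iterate_succ_apply', hab, sub_self]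
  rw [← sub_eq_zero, ← iterate_map_sub]
  exact h _ hsub

theorem sharp_restriction_bijective_general {G : Type*} [AddCommGroup G] (f : G →+ G)
    (N₀ : ℕ)
    (hker : ∀ n, 1 ≤ n → ∀ y : G, (⇑f)^[n] y = 0 → (⇑f)^[N₀] y = 0) :
    (∀ x ∈ ⋂ n ∈ Set.Ici 1, Set.range ((⇑f)^[n]),
        f x ∈ ⋂ n ∈ Set.Ici 1, Set.range ((⇑f)^[n])) ∧
      Set.BijOn f (⋂ n ∈ Set.Ici 1, Set.range ((⇑f)^[n]))
        (⋂ n ∈ Set.Ici 1, Set.range ((⇑f)^[n])) := by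
  rw [iInter_Ici_one_range_iterate]
  have hbij := bijOn_iInter_range_iterate
    (f.injOn_range_iterate (hker (N₀ + 1) (Nat.le_add_left 1 N₀)))
  exact ⟨hbij.mapsTo, hbij⟩

/-- Lemma C:phitaut (group-theoretic form): let `f` be an endomorphism of an
abelian group `G`, `S = ⋂_{n ≥ 1} f^n(G)`, and suppose all kernels of iterates of
`f` are contained in `ker (f^{N₀})` for some `N₀ ≥ 1`. Then `f` maps `S` into `S`
and restricts to a bijection of `S` onto itself. -/
theorem sharp_restriction_bijective {G : Type*} [AddCommGroup G] (f : G →+ G)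
    (N₀ : ℕ) (hN₀ : 1 ≤ N₀)
    (hker : ∀ n, 1 ≤ n → ∀ y : G, (⇑f)^[n] y = 0 → (⇑f)^[N₀] y = 0) :
    (∀ x ∈ ⋂ n ∈ Set.Ici 1, Set.range ((⇑f)^[n]),
        f x ∈ ⋂ n ∈ Set.Ici 1, Set.range ((⇑f)^[n])) ∧
      Set.BijOn f (⋂ n ∈ Set.Ici 1, Set.range ((⇑f)^[n]))
        (⋂ n ∈ Set.Ici 1, Set.range ((⇑f)^[n])) :=
  sharp_restriction_bijective_general f N₀ hker
end

section
/- Let K be a field of characteristic p > 0 and let Ω be a separable closure of K. Let r ≥ 1 and a_1, …, a_r ∈ K, and define f : Ω → Ω by f(x) = Σ_{i=1}^r a_i x^{p^i}. Assume there exists N₀ ≥ 1 such that for every n ≥ 1, every y ∈ Ω with f^n(y) = 0 satisfies f^{N₀}(y) = 0. Suppose (x_n)_{n≥0} is a sequence of elements of Ω with x_0 ∈ K and f(x_{n+1}) = x_n for all n ≥ 0. Then x_n ∈ K for every n ≥ 0. -/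
open Finset

/-- An element of a separable closure fixed by every `K`-automorphism lies in `K`. -/
lemma mem_range_of_fixed_aux {K Ω : Type*} [Field K] [Field Ω]
    [Algebra K Ω] [IsSepClosure K Ω] (z : Ω)
    (hz : ∀ σ : Ω ≃ₐ[K] Ω, σ z = z) : z ∈ Set.range (algebraMap K Ω) := by
  haveI : IsGalois K Ω := inferInstance
  have hint : IsIntegral K z := Algebra.IsIntegral.isIntegral z
  have hroots : ∀ y : Ω, IsConjRoot K z y → y = z := by
    intro y hy
    obtain ⟨σ, hσ⟩ := hy.exists_algEquiv
    have h1 : σ.symm z = y := by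
      have := congrArg σ.symm hσ
      simpa using this.symm
    rw [← h1]
    exact hz σ.symm
  have hsep : (minpoly K z).Separable := Algebra.IsSeparable.isSeparable K z
  have hsplit : Polynomial.Splits ((minpoly K z).map (algebraMap K Ω)) :=
    (IsGalois.to_normal (F := K) (E := Ω)).splits z
  have hcard : (minpoly K z).natDegree = ((minpoly K z).aroots Ω).card :=
    (Polynomial.natDegree_map (algebraMap K Ω)).symm.trans hsplit.natDegree_eq_card_roots
  have hnodup : ((minpoly K z).aroots Ω).Nodup :=
    Polynomial.nodup_roots hsep.map
  have hmem : ∀ y ∈ (minpoly K z).aroots Ω, y = z := fun y hy =>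
    hroots y (isConjRoot_of_aeval_eq_zero hint (Polynomial.mem_aroots.mp hy).2)
  have hle : ((minpoly K z).aroots Ω).card ≤ 1 := by
    classical
    rw [← Multiset.toFinset_card_of_nodup hnodup]
    apply Finset.card_le_one.mpr
    intro u hu v hv
    rw [hmem u (Multiset.mem_toFinset.mp hu), hmem v (Multiset.mem_toFinset.mp hv)]
  have hpos : 0 < (minpoly K z).natDegree := minpoly.natDegree_pos hint
  have hdeg1 : (minpoly K z).natDegree = 1 := by omega
  exact minpoly.natDegree_eq_one_iff.mp hdeg1

/-- The Galois-theoretic claim inside the proof of Theorem T:t: let `K` be a field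
of characteristic `p > 0` with separable closure `Ω`, and let
`f(x) = ∑_{i=1}^r a_i x^{p^i}` be an additive polynomial map with coefficients in
`K`. If all kernels of iterates of `f` are contained in `ker (f^{N₀})` for some
`N₀ ≥ 1`, then any coherent sequence `(x_n)` in `Ω` with `x_0 ∈ K` and
`f(x_{n+1}) = x_n` lies entirely in `K`. -/
theorem coherent_sequence_mem_base_field {K Ω : Type*} [Field K] [Field Ω]
    (p : ℕ) [Fact p.Prime] [CharP K p]
    [Algebra K Ω] [IsSepClosure K Ω]
    (r : ℕ) (hr : 1 ≤ r) (a : ℕ → K) (f : Ω → Ω)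
    (hf : ∀ x : Ω, f x = ∑ i ∈ Finset.Icc 1 r, algebraMap K Ω (a i) * x ^ (p ^ i))
    (N₀ : ℕ) (hN₀ : 1 ≤ N₀)
    (hker : ∀ n, 1 ≤ n → ∀ y : Ω, f^[n] y = 0 → f^[N₀] y = 0)
    (x : ℕ → Ω) (hx0 : x 0 ∈ Set.range (algebraMap K Ω))
    (hseq : ∀ n, f (x (n + 1)) = x n) :
    ∀ n, x n ∈ Set.range (algebraMap K Ω) := by
  haveI : CharP Ω p := charP_of_injective_algebraMap (algebraMap K Ω).injective p
  have hcomm : ∀ (σ : Ω ≃ₐ[K] Ω) (u : Ω), σ (f u) = f (σ u) := by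
    intro σ u
    rw [hf, hf, map_sum]
    exact Finset.sum_congr rfl fun i _ => by rw [map_mul, map_pow, AlgEquiv.commutes]
  have hsub : ∀ u v : Ω, f (u - v) = f u - f v := by
    intro u v
    rw [hf, hf, hf, ← Finset.sum_sub_distrib]
    exact Finset.sum_congr rfl fun i _ => by rw [← mul_sub, sub_pow_char_pow]
  intro n
  apply mem_range_of_fixed_aux
  intro σ
  set y : ℕ → Ω := fun m => x m - σ (x m) with hy
  have hy0 : y 0 = 0 := by
    obtain ⟨c, hc⟩ := hx0
    simp [hy, ← hc, AlgEquiv.commutes]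
  have hystep : ∀ m, f (y (m + 1)) = y m := by
    intro m
    simp only [hy]
    rw [hsub, ← hcomm, hseq]
  have hiter : ∀ m k, f^[m] (y (k + m)) = y k := by
    intro m
    induction m with
    | zero => intro k; simp
    | succ m ih =>
      intro k
      rw [show k + (m + 1) = (k + m) + 1 by ring, Function.iterate_succ_apply,
        hystep (k + m)]
      exact ih k
  have hkill : ∀ m, f^[m] (y m) = 0 := by
    intro m
    have := hiter m 0
    simpa [hy0] using this
  -- y n = f^[N₀] (y (n + N₀)) = 0
  have h1 : f^[N₀] (y (n + N₀)) = y n := hiter N₀ n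
  have h2 : f^[n + N₀] (y (n + N₀)) = 0 := hkill (n + N₀)
  have h3 : f^[N₀] (y (n + N₀)) = 0 := hker (n + N₀) (by omega) _ h2
  have hyn : y n = 0 := by rw [← h1, h3]
  have : σ (x n) = x n := by
    have := sub_eq_zero.mp hyn
    exact this.symm
  exact this
end

section
/- Let p > 2 be a prime and q = p^s with s ≥ 1. Let K = 𝔽_{q²}(t) be the field of rational functions over the field with q² elements, and let λ ∈ 𝔽_{q²} \ 𝔽_q (i.e., λ^{q²} = λ but λ^q ≠ λ). In the polynomial ring K[X], set f = t·X^q + X^{q³}, g = X + f, and φ = f ∘ g (composition of polynomials). Then for every n ≥ 1, denoting by φ^{∘n} the n-fold composition of φ with itself, the polynomials φ^{∘n} ∘ (λ·X) and λ·φ^{∘n} are distinct; that is, the map induced by φ^{∘n} does not commute with multiplication by λ. -/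
open Polynomial Finset

lemma aux_coeff_comp_C_mul_X {R : Type*} [CommRing R] (P : R[X]) (l : R) (d : ℕ) :
    (P.comp (C l * X)).coeff d = P.coeff d * l ^ d := by
  induction P using Polynomial.induction_on' with
  | add p q hp hq => simp [add_comp, hp, hq, add_mul]
  | monomial i a =>
      rw [monomial_comp, mul_pow, ← C_pow, ← mul_assoc, ← C_mul]
      simp only [coeff_C_mul, coeff_X_pow, coeff_monomial]
      by_cases h : i = d
      · subst h; simp
      · simp [h, Ne.symm h]

lemma aux_iterate_map {R S : Type*} [CommRing R] [CommRing S] (ρ : R →+* S) (φ : R[X]) :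
    ∀ n : ℕ, (fun ψ => (φ.map ρ).comp ψ)^[n] X = ((fun ψ => φ.comp ψ)^[n] X).map ρ := by
  intro n
  induction n with
  | zero => simp
  | succ n ih =>
      rw [Function.iterate_succ_apply', Function.iterate_succ_apply', ih, ← Polynomial.map_comp]

lemma aux_pascal_sum {R : Type*} [CommSemiring R] (n : ℕ) (g : ℕ → R) :
    ∑ k ∈ Finset.range (n+2), ((n+1).choose k : R) * g k
      = (∑ k ∈ Finset.range (n+1), (n.choose k : R) * g k)
        + ∑ k ∈ Finset.range (n+1), (n.choose k : R) * g (k+1) := by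
  rw [Finset.sum_range_succ' (fun k => ((n+1).choose k : R) * g k) (n+1)]
  simp only [Nat.choose_succ_succ, Nat.cast_add, add_mul, Finset.sum_add_distrib]
  rw [Nat.choose_zero_right]
  have h2 : (∑ k ∈ Finset.range (n+1), (n.choose (k+1) : R) * g (k+1))
      + ((n.choose 0 : ℕ) : R) * g 0 = ∑ k ∈ Finset.range (n+1), (n.choose k : R) * g k := by
    rw [← Finset.sum_range_succ' (fun k => (n.choose k : R) * g k) (n+1),
      Finset.sum_range_succ]
    simp
  rw [← h2]
  simp only [Nat.choose_zero_right, Nat.cast_one]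
  ring

lemma aux_choose_pow (p : ℕ) [hp : Fact p.Prime] (e u : ℕ) :
    (p ^ e * u).choose (p ^ e) ≡ u [MOD p] := by
  induction e with
  | zero => simpa [Nat.choose_one_right] using Nat.ModEq.refl u
  | succ e ih =>
      have h := @Choose.choose_modEq_choose_mod_mul_choose_div_nat
        (p ^ (e+1) * u) (p ^ (e+1)) p _
      have hp0 : 0 < p := hp.out.pos
      have h1 : p ^ (e+1) * u = p * (p ^ e * u) := by ring
      have h2 : p ^ (e+1) = p * p ^ e := by ring
      rw [h1, h2, Nat.mul_mod_right, Nat.mul_mod_right, Nat.mul_div_cancel_left _ hp0,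
        Nat.mul_div_cancel_left _ hp0] at h
      rw [h1, h2]
      refine Nat.ModEq.trans ?_ ih
      simpa using h

lemma aux_pow_odd {K : Type*} [Monoid K] (l : K) (q : ℕ) (hl : l ^ q ^ 2 = l)
    {j : ℕ} (hj : Odd j) : l ^ q ^ j = l ^ q := by
  obtain ⟨a, rfl⟩ := hj
  induction a with
  | zero => simp
  | succ a ih =>
      have h : q ^ (2*(a+1)+1) = q ^ (2*a+1) * q ^ 2 := by rw [← pow_add]; ring_nf
      rw [h, pow_mul, ih, ← pow_mul, mul_comm, pow_mul, hl]

lemma aux_iter_closed {F : Type*} [Field F] (p : ℕ) [Fact p.Prime] [CharP F p]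
    (m : ℕ) (n : ℕ) :
    (fun ψ : F[X] => ((X ^ p ^ m + X ^ (p ^ m * p ^ m) : F[X])).comp ψ)^[n] X
      = ∑ k ∈ Finset.range (n+1), ((n.choose k : F[X])) * X ^ ((p ^ m) ^ (n + k)) := by
  have key : ∀ (c : ℕ) (E : ℕ), ((c : F[X]) * X ^ E) ^ p ^ m = (c : F[X]) * X ^ (E * p ^ m) := by
    intro c E
    rw [mul_pow, ← pow_mul, ← iterateFrobenius_def (R := F[X]) p m, map_natCast]
  induction n with
  | zero => simp
  | succ n ih =>
      rw [Function.iterate_succ_apply', ih, add_comp, X_pow_comp, X_pow_comp, pow_mul,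
        sum_pow_char_pow, sum_pow_char_pow]
      simp_rw [key, ← pow_succ]
      rw [aux_pascal_sum n (fun k => (X : F[X]) ^ ((p ^ m) ^ ((n+1) + k)))]
      refine congrArg₂ (· + ·) ?_ ?_
      · apply Finset.sum_congr rfl; intro k _
        congr 2
        congr 1
        omega
      · apply Finset.sum_congr rfl; intro k _
        congr 2
        congr 1
        omega

/-- Example E:lambda: let `p > 2`, `q = p^s`, `K = 𝔽_{q²}(t)`, and
`λ ∈ 𝔽_{q²} \ 𝔽_q` (i.e. `λ^{q²} = λ` but `λ^q ≠ λ`). With `f = t X^q + X^{q³}`,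
`g = X + f` and `φ = f ∘ g` in `K[X]`, no iterate `φ^{∘n}` (for `n ≥ 1`)
commutes with multiplication by `λ`. -/
theorem iterate_phi_not_commute_lambda (p s : ℕ) [Fact p.Prime] (hp2 : 2 < p)
    (hs : 1 ≤ s) (q : ℕ) (hq : q = p ^ s)
    (l : RatFunc (GaloisField p (2 * s)))
    (hl1 : l ^ (q ^ 2) = l) (hl2 : l ^ q ≠ l) :
    ∀ n : ℕ, 1 ≤ n →
      (let f : Polynomial (RatFunc (GaloisField p (2 * s))) :=
        C RatFunc.X * X ^ q + X ^ (q ^ 3);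
      let g := X + f;
      let φ := f.comp g;
      ((fun ψ => φ.comp ψ)^[n] X).comp (C l * X) ≠
        C l * ((fun ψ => φ.comp ψ)^[n] X)) := by
  intro n hn fK gK φK
  have hp : p.Prime := Fact.out
  set F := GaloisField p (2 * s) with hF
  set ρ : Polynomial F →+* RatFunc F := (algebraMap (Polynomial F) (RatFunc F)) with hρ
  set f₁ : (Polynomial F)[X] := C Polynomial.X * X ^ q + X ^ (q ^ 3) with hf₁
  set φ₁ := f₁.comp (X + f₁) with hφ₁
  have hfK : fK = C RatFunc.X * X ^ q + X ^ (q ^ 3) := rfl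
  have hf1 : Polynomial.map ρ f₁ = fK := by
    rw [hfK, hf₁]
    simp only [Polynomial.map_add, Polynomial.map_mul, Polynomial.map_pow, map_C, map_X]
    rw [RatFunc.algebraMap_X]
  have hφ : φK = φ₁.map ρ := by
    show fK.comp gK = _
    rw [hφ₁, Polynomial.map_comp, hf1, Polynomial.map_add, map_X, hf1]
  have hIter : (fun ψ => φK.comp ψ)^[n] X = ((fun ψ => φ₁.comp ψ)^[n] X).map ρ := by
    simp only [hφ]
    exact aux_iterate_map ρ φ₁ n
  set P₁ := (fun ψ => φ₁.comp ψ)^[n] X with hP₁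
  -- numerics
  set e := n.factorization p with he
  set E := p ^ e with hE
  set u := n / E with hu'
  have hn0 : n ≠ 0 := by omega
  have hEdvd : E ∣ n := Nat.ordProj_dvd n p
  have hElen : E ≤ n := Nat.le_of_dvd (by omega) hEdvd
  have huEq : E * u = n := Nat.ordProj_mul_ordCompl_eq_self n p
  have hpu : ¬ p ∣ u := Nat.not_dvd_ordCompl hp hn0
  set k₀ := n - E with hk₀
  set M := n + k₀ with hM
  have hModd : Odd M := by
    have hpodd : Odd p := hp.odd_of_ne_two (by omega)
    have hEodd : Odd E := hpodd.pow
    have hM2 : M = 2 * n - E := by omega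
    rw [hM2]
    exact Nat.Even.sub_odd (by omega) (even_two_mul n) hEodd
  have h3M : Odd (3 * M) := (by decide : Odd 3).mul hModd
  have hchoose : ¬ p ∣ n.choose k₀ := by
    have h1 : n.choose k₀ = n.choose E := by rw [hk₀, Nat.choose_symm hElen]
    have h2 : n.choose E ≡ u [MOD p] := by
      have := aux_choose_pow p e u
      rwa [huEq] at this
    intro hdvd
    exact hpu ((Nat.modEq_zero_iff_dvd).1
      (h2.symm.trans (h1 ▸ (Nat.modEq_zero_iff_dvd).2 hdvd)))
  have hchooseF : ((n.choose k₀ : F)) ≠ 0 := by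
    intro h0
    exact hchoose ((CharP.cast_eq_zero_iff F p _).1 h0)
  -- the t = 0 specialization
  set ε : Polynomial F →+* F := Polynomial.evalRingHom (0 : F) with hε
  have hq3 : q ^ 3 = p ^ (3 * s) := by subst hq; rw [← pow_mul]; ring_nf
  have hmap2 : Polynomial.map ε φ₁ = (X ^ p ^ (3*s) + X ^ (p ^ (3*s) * p ^ (3*s)) : F[X]) := by
    have hf2 : Polynomial.map ε f₁ = X ^ (q ^ 3) := by
      rw [hf₁]
      simp only [Polynomial.map_add, Polynomial.map_mul, Polynomial.map_pow, map_C, map_X, hε,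
        coe_evalRingHom, eval_X, map_zero, C_0, zero_mul, zero_add]
    rw [hφ₁, Polynomial.map_comp, hf2, Polynomial.map_add, map_X, hf2, X_pow_comp, hq3,
      add_pow_char_pow, ← pow_mul]
  have hIter2 : Polynomial.map ε P₁
      = ∑ k ∈ Finset.range (n+1), ((n.choose k : F[X])) * X ^ ((p ^ (3*s)) ^ (n + k)) := by
    rw [hP₁, ← aux_iterate_map ε φ₁ n, hmap2]
    exact aux_iter_closed p (3*s) n
  set d := q ^ (3 * M) with hd
  have hdE : d = (p ^ (3*s)) ^ (n + k₀) := by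
    rw [hd, ← hM, hq, ← pow_mul, ← pow_mul]
    congr 1
    ring
  have hQ2 : 2 ≤ p ^ (3*s) := by
    calc 2 ≤ p := by omega
    _ = p ^ 1 := (pow_one p).symm
    _ ≤ p ^ (3*s) := Nat.pow_le_pow_right (by omega) (by omega)
  have hcoeff2 : (Polynomial.map ε P₁).coeff d = ((n.choose k₀ : F)) := by
    rw [hIter2, finset_sum_coeff, hdE]
    rw [Finset.sum_eq_single k₀]
    · have hC : ((n.choose k₀ : ℕ) : F[X]) = C ((n.choose k₀ : F)) := (map_natCast C _).symm
      rw [hC, coeff_C_mul, coeff_X_pow, if_pos rfl, mul_one]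
    · intro k hk hkne
      have hC : ((n.choose k : ℕ) : F[X]) = C ((n.choose k : F)) := (map_natCast C _).symm
      rw [hC, coeff_C_mul, coeff_X_pow, if_neg, mul_zero]
      intro hcontra
      have := Nat.pow_right_injective hQ2 hcontra
      exact hkne (by omega)
    · intro hmem
      exact absurd (Finset.mem_range.2 (by omega)) hmem
  have hεc : ε (P₁.coeff d) = ((n.choose k₀ : F)) := by
    rw [← Polynomial.coeff_map, hcoeff2]
  have hc₁ : P₁.coeff d ≠ 0 := by
    intro h0
    rw [h0, map_zero] at hεc
    exact hchooseF hεc.symm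
  -- conclude
  intro hEq
  have hco := congrArg (fun P => P.coeff d) hEq
  rw [aux_coeff_comp_C_mul_X, coeff_C_mul, hIter, Polynomial.coeff_map] at hco
  set c := ρ (P₁.coeff d) with hc'
  have hc : c ≠ 0 := by
    intro h0
    exact hc₁ (IsFractionRing.injective (Polynomial F) (RatFunc F) (by rw [map_zero]; exact h0))
  rw [hd, aux_pow_odd l q hl1 h3M] at hco
  apply hl2
  have : c * l ^ q = c * l := by rw [hco]; ring
  exact mul_left_cancel₀ hc this
end
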